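/- Let (x*,y*) be a stationary point with dual solution (ρ*,w*,z*), ρ* ∈ (0,1), and set λ* = (w*−x*)ᵀRz*, μ* = w*ᵀC(z*−y*). If f_C(w*,z*) > f_R(w*,z*), then f(ũ,ṽ) = f_R(x*,z*)·(f_C(w*,y*)−μ*)/(f_C(w*,y*)+λ*−μ*) ≤ (1−μ*)/(1+λ*−μ*). Symmetrically, if f_R(w*,z*) > f_C(w*,z*), then f(ũ,ṽ) = f_C(w*,y*)·(f_R(x*,z*)−λ*)/(f_R(x*,z*)+μ*−λ*) ≤ (1−λ*)/(1+μ*−λ*). Moreover, if (x*,y*) is not a Nash equilibrium, then equality holds in the respective inequality if and only if f_C(w*,y*) = f_R(x*,z*) = 1. -/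

import Mathlib

open scoped BigOperators Classical
open Matrix Filter

noncomputable section

namespace TS

/-- The probability simplex in `ℝ^k`. -/
def Δ (k : ℕ) : Set (Fin k → ℝ) := {x | (∀ i, 0 ≤ x i) ∧ ∑ i, x i = 1}

/-- Maximum entry of a vector. -/
def vmax {k : ℕ} (u : Fin k → ℝ) : ℝ := ⨆ i, u i

/-- Maximum entry of a vector over an index set. -/
def vmaxOn {k : ℕ} (S : Set (Fin k)) (u : Fin k → ℝ) : ℝ := ⨆ i ∈ S, u i

/-- The support of a vector: indices with positive entries. -/
def supp {k : ℕ} (u : Fin k → ℝ) : Set (Fin k) := {i | 0 < u i}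

/-- The set of indices where `u` attains its maximum entry. -/
def suppmax {k : ℕ} (u : Fin k → ℝ) : Set (Fin k) := {i | ∀ j, u j ≤ u i}

/-- The set of indices where `u` attains its minimum entry. -/
def suppmin {k : ℕ} (u : Fin k → ℝ) : Set (Fin k) := {i | ∀ j, u i ≤ u j}

variable {m n : ℕ}

/-- `f_R(x,y) = max(Ry) − xᵀRy`. -/
def fR (R : Matrix (Fin m) (Fin n) ℝ) (x : Fin m → ℝ) (y : Fin n → ℝ) : ℝ :=
  vmax (R.mulVec y) - x ⬝ᵥ R.mulVec y

/-- `f_C(x,y) = max(Cᵀx) − xᵀCy`. -/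
def fC (C : Matrix (Fin m) (Fin n) ℝ) (x : Fin m → ℝ) (y : Fin n → ℝ) : ℝ :=
  vmax (Matrix.vecMul x C) - x ⬝ᵥ C.mulVec y

/-- `f(x,y) = max{f_R(x,y), f_C(x,y)}`. -/
def fNE (R C : Matrix (Fin m) (Fin n) ℝ) (x : Fin m → ℝ) (y : Fin n → ℝ) : ℝ :=
  max (fR R x y) (fC C x y)

/-- `S_R(y) = suppmax(Ry)`. -/
def SR (R : Matrix (Fin m) (Fin n) ℝ) (y : Fin n → ℝ) : Set (Fin m) := suppmax (R.mulVec y)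

/-- `S_C(x) = suppmax(Cᵀx)`. -/
def SC (C : Matrix (Fin m) (Fin n) ℝ) (x : Fin m → ℝ) : Set (Fin n) := suppmax (Matrix.vecMul x C)

/-- `g` has right (one-sided) derivative `d` at `0`: `lim_{θ→0⁺} (g θ − g 0)/θ = d`. -/
def HasPosDeriv (g : ℝ → ℝ) (d : ℝ) : Prop :=
  Tendsto (fun θ : ℝ => (g θ - g 0) / θ) (nhdsWithin 0 (Set.Ioi 0)) (nhds d)

/-- `(x,y)` is a stationary point: for every `(x',y')` in the product simplex, the scaled
directional derivative `Df(x,y,x',y')` of `f` exists and is nonnegative. -/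
def IsStationary (R C : Matrix (Fin m) (Fin n) ℝ) (x : Fin m → ℝ) (y : Fin n → ℝ) : Prop :=
  ∀ x' ∈ Δ m, ∀ y' ∈ Δ n, ∃ d : ℝ,
    HasPosDeriv (fun θ : ℝ => fNE R C (x + θ • (x' - x)) (y + θ • (y' - y))) d ∧ 0 ≤ d

/-- The function `T(x,y,x',y',ρ,w,z)`. -/
def Tfun (R C : Matrix (Fin m) (Fin n) ℝ) (x : Fin m → ℝ) (y : Fin n → ℝ)
    (x' : Fin m → ℝ) (y' : Fin n → ℝ) (ρ : ℝ) (w : Fin m → ℝ) (z : Fin n → ℝ) : ℝ :=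
  ρ * (w ⬝ᵥ R.mulVec y' - x ⬝ᵥ R.mulVec y' - x' ⬝ᵥ R.mulVec y + x ⬝ᵥ R.mulVec y)
    + (1 - ρ) * (x' ⬝ᵥ C.mulVec z - x ⬝ᵥ C.mulVec y' - x' ⬝ᵥ C.mulVec y + x ⬝ᵥ C.mulVec y)

/-- Feasibility for the tuple `(ρ,w,z)`: `ρ ∈ [0,1]`, `w ∈ Δ_m` with `supp w ⊆ S_R(y)`,
`z ∈ Δ_n` with `supp z ⊆ S_C(x)`. -/
def dualFeasible (R C : Matrix (Fin m) (Fin n) ℝ) (x : Fin m → ℝ) (y : Fin n → ℝ)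
    (ρ : ℝ) (w : Fin m → ℝ) (z : Fin n → ℝ) : Prop :=
  ρ ∈ Set.Icc (0:ℝ) 1 ∧ w ∈ Δ m ∧ supp w ⊆ SR R y ∧ z ∈ Δ n ∧ supp z ⊆ SC C x

/-- `max_{ρ,w,z} T(x,y,x',y',ρ,w,z)` over feasible `(ρ,w,z)`. -/
def innerMax (R C : Matrix (Fin m) (Fin n) ℝ) (x : Fin m → ℝ) (y : Fin n → ℝ)
    (x' : Fin m → ℝ) (y' : Fin n → ℝ) : ℝ :=
  sSup {t : ℝ | ∃ ρ w z, dualFeasible R C x y ρ w z ∧ t = Tfun R C x y x' y' ρ w z}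

/-- `V(x,y) = min_{(x',y') ∈ Δ_m×Δ_n} max_{ρ,w,z} T(x,y,x',y',ρ,w,z)`. -/
def Vval (R C : Matrix (Fin m) (Fin n) ℝ) (x : Fin m → ℝ) (y : Fin n → ℝ) : ℝ :=
  sInf {t : ℝ | ∃ x' ∈ Δ m, ∃ y' ∈ Δ n, t = innerMax R C x y x' y'}

/-- `min_{(x',y') ∈ Δ_m×Δ_n} T(x,y,x',y',ρ,w,z)`. -/
def innerMin (R C : Matrix (Fin m) (Fin n) ℝ) (x : Fin m → ℝ) (y : Fin n → ℝ)
    (ρ : ℝ) (w : Fin m → ℝ) (z : Fin n → ℝ) : ℝ :=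
  sInf {t : ℝ | ∃ x' ∈ Δ m, ∃ y' ∈ Δ n, t = Tfun R C x y x' y' ρ w z}

/-- `(ρ,w,z)` is a dual solution at `(x,y)`. -/
def IsDualSolution (R C : Matrix (Fin m) (Fin n) ℝ) (x : Fin m → ℝ) (y : Fin n → ℝ)
    (ρ : ℝ) (w : Fin m → ℝ) (z : Fin n → ℝ) : Prop :=
  dualFeasible R C x y ρ w z ∧ Vval R C x y = innerMin R C x y ρ w z

/-- `(x,y)` is an `ε`-approximate Nash equilibrium. -/
def IsEpsNash (R C : Matrix (Fin m) (Fin n) ℝ) (x : Fin m → ℝ) (y : Fin n → ℝ) (ε : ℝ) : Prop :=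
  (∀ x' ∈ Δ m, x' ⬝ᵥ R.mulVec y ≤ x ⬝ᵥ R.mulVec y + ε) ∧
  (∀ y' ∈ Δ n, x ⬝ᵥ C.mulVec y' ≤ x ⬝ᵥ C.mulVec y + ε)

/-- A Nash equilibrium is a `0`-approximate Nash equilibrium. -/
def IsNash (R C : Matrix (Fin m) (Fin n) ℝ) (x : Fin m → ℝ) (y : Fin n → ℝ) : Prop :=
  IsEpsNash R C x y 0

/-- `λ* = (w*−x*)ᵀRz*`. -/
def lamStar (R : Matrix (Fin m) (Fin n) ℝ) (xs ws : Fin m → ℝ) (zs : Fin n → ℝ) : ℝ :=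
  (ws - xs) ⬝ᵥ R.mulVec zs

/-- `μ* = w*ᵀC(z*−y*)`. -/
def muStar (C : Matrix (Fin m) (Fin n) ℝ) (ws : Fin m → ℝ) (ys zs : Fin n → ℝ) : ℝ :=
  ws ⬝ᵥ C.mulVec (zs - ys)

/-- `p* = f_R(x*,z*)/(f_R(x*,z*)+f_C(w*,z*)−f_R(w*,z*))` (`= 0` if the denominator is `0`,
by the real-division-by-zero convention). -/
def pstar (R C : Matrix (Fin m) (Fin n) ℝ) (xs ws : Fin m → ℝ) (zs : Fin n → ℝ) : ℝ :=
  fR R xs zs / (fR R xs zs + fC C ws zs - fR R ws zs)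

/-- `q* = f_C(w*,y*)/(f_C(w*,y*)+f_R(w*,z*)−f_C(w*,z*))` (`= 0` if the denominator is `0`). -/
def qstar (R C : Matrix (Fin m) (Fin n) ℝ) (ws : Fin m → ℝ) (ys zs : Fin n → ℝ) : ℝ :=
  fC C ws ys / (fC C ws ys + fR R ws zs - fC C ws zs)

/-- The adjusted pair `(ũ,ṽ)` of Method 3. -/
def tildeUV (R C : Matrix (Fin m) (Fin n) ℝ) (xs : Fin m → ℝ) (ys : Fin n → ℝ)
    (ws : Fin m → ℝ) (zs : Fin n → ℝ) : (Fin m → ℝ) × (Fin n → ℝ) :=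
  if fR R ws zs ≤ fC C ws zs then
    (pstar R C xs ws zs • ws + (1 - pstar R C xs ws zs) • xs, zs)
  else
    (ws, qstar R C ws ys zs • zs + (1 - qstar R C ws ys zs) • ys)


/-! ### Auxiliary lemmas -/

section Aux

variable {k : ℕ}

lemma le_vmax' (u : Fin (k+1) → ℝ) (i : Fin (k+1)) : u i ≤ vmax u :=
  le_ciSup (Set.Finite.bddAbove (Set.finite_range u)) i

lemma vmax_le' {u : Fin (k+1) → ℝ} {b : ℝ} (h : ∀ i, u i ≤ b) : vmax u ≤ b :=
  ciSup_le h

lemma dot_le_vmax {x u : Fin (k+1) → ℝ} (hx : x ∈ Δ (k+1)) : x ⬝ᵥ u ≤ vmax u := by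
  calc x ⬝ᵥ u = ∑ i, x i * u i := rfl
    _ ≤ ∑ i, x i * vmax u :=
        Finset.sum_le_sum fun i _ => mul_le_mul_of_nonneg_left (le_vmax' u i) (hx.1 i)
    _ = vmax u := by rw [← Finset.sum_mul, hx.2, one_mul]

lemma dot_eq_vmax {z u : Fin (k+1) → ℝ} (hz : z ∈ Δ (k+1)) (h : supp z ⊆ suppmax u) :
    u ⬝ᵥ z = vmax u := by
  have key : ∀ j, u j * z j = vmax u * z j := by
    intro j
    rcases eq_or_lt_of_le (hz.1 j) with h0 | h0
    · rw [← h0, mul_zero, mul_zero]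
    · have hj : j ∈ suppmax u := h h0
      have huj : u j = vmax u := le_antisymm (le_vmax' u j) (vmax_le' hj)
      rw [huj]
  calc u ⬝ᵥ z = ∑ j, u j * z j := rfl
    _ = ∑ j, vmax u * z j := Finset.sum_congr rfl fun j _ => key j
    _ = vmax u := by rw [← Finset.mul_sum, hz.2, mul_one]

lemma vmax_combo {u v : Fin (k+1) → ℝ} {p q : ℝ} (hp : 0 ≤ p) (hq : 0 ≤ q) :
    vmax (p • u + q • v) ≤ p * vmax u + q * vmax v :=
  vmax_le' fun i => by
    have := le_vmax' u i
    have := le_vmax' v i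
    simp only [Pi.add_apply, Pi.smul_apply, smul_eq_mul]
    nlinarith

end Aux

section Game

variable {m n : ℕ} {R C : Matrix (Fin (m+1)) (Fin (n+1)) ℝ}
variable {x w : Fin (m+1) → ℝ} {y z : Fin (n+1) → ℝ}

lemma mulVec_entry_mem (hR : ∀ i j, R i j ∈ Set.Icc (0:ℝ) 1) (hz : z ∈ Δ (n+1))
    (i : Fin (m+1)) : (R.mulVec z) i ∈ Set.Icc (0:ℝ) 1 := by
  constructor
  · show (0:ℝ) ≤ ∑ j, R i j * z j
    exact Finset.sum_nonneg fun j _ => mul_nonneg (hR i j).1 (hz.1 j)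
  · calc ∑ j, R i j * z j ≤ ∑ j, z j :=
          Finset.sum_le_sum fun j _ => by
            nlinarith [(hR i j).1, (hR i j).2, hz.1 j]
      _ = 1 := hz.2

lemma vecMul_entry_mem (hC : ∀ i j, C i j ∈ Set.Icc (0:ℝ) 1) (hx : x ∈ Δ (m+1))
    (j : Fin (n+1)) : (Matrix.vecMul x C) j ∈ Set.Icc (0:ℝ) 1 := by
  constructor
  · show (0:ℝ) ≤ ∑ i, x i * C i j
    exact Finset.sum_nonneg fun i _ => mul_nonneg (hx.1 i) (hC i j).1
  · calc ∑ i, x i * C i j ≤ ∑ i, x i :=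
          Finset.sum_le_sum fun i _ => by
            nlinarith [(hC i j).1, (hC i j).2, hx.1 i]
      _ = 1 := hx.2

lemma dot_nonneg {a b : Fin (k+1) → ℝ} (ha : ∀ i, 0 ≤ a i) (hb : ∀ i, 0 ≤ b i) :
    0 ≤ a ⬝ᵥ b :=
  Finset.sum_nonneg fun i _ => mul_nonneg (ha i) (hb i)

lemma fR_mem (hR : ∀ i j, R i j ∈ Set.Icc (0:ℝ) 1) (hx : x ∈ Δ (m+1)) (hz : z ∈ Δ (n+1)) :
    fR R x z ∈ Set.Icc (0:ℝ) 1 := by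
  constructor
  · exact sub_nonneg.mpr (dot_le_vmax hx)
  · have h1 : vmax (R.mulVec z) ≤ 1 := vmax_le' fun i => (mulVec_entry_mem hR hz i).2
    have h2 : 0 ≤ x ⬝ᵥ R.mulVec z :=
      dot_nonneg hx.1 fun i => (mulVec_entry_mem hR hz i).1
    simp only [fR]; linarith

lemma fC_mem (hC : ∀ i j, C i j ∈ Set.Icc (0:ℝ) 1) (hx : x ∈ Δ (m+1)) (hz : z ∈ Δ (n+1)) :
    fC C x z ∈ Set.Icc (0:ℝ) 1 := by
  constructor
  · have : x ⬝ᵥ C.mulVec z ≤ vmax (Matrix.vecMul x C) := by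
      rw [Matrix.dotProduct_mulVec]
      calc Matrix.vecMul x C ⬝ᵥ z = z ⬝ᵥ Matrix.vecMul x C := dotProduct_comm _ _
        _ ≤ vmax (Matrix.vecMul x C) := dot_le_vmax hz
    exact sub_nonneg.mpr this
  · have h1 : vmax (Matrix.vecMul x C) ≤ 1 := vmax_le' fun j => (vecMul_entry_mem hC hx j).2
    have h2 : 0 ≤ x ⬝ᵥ C.mulVec z := by
      rw [Matrix.dotProduct_mulVec]
      exact dot_nonneg (fun j => (vecMul_entry_mem hC hx j).1) hz.1
    simp only [fC]; linarith

end Game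

/-- Core algebraic lemma for the bound and the equality condition. -/
lemma core_ineq {a c d g lam mu : ℝ} (ha : 0 ≤ a) (ha1 : a ≤ 1) (hc : 0 ≤ c)
    (hd1 : d ≤ 1) (hg1 : g ≤ 1) (hcd : c < d)
    (hlam : lam = a - c) (hmu : mu = g - d) :
    a * d / (a + d - c) ≤ (1 - mu) / (1 + lam - mu) ∧
    (a * d / (a + d - c) = (1 - mu) / (1 + lam - mu) ↔ (g = 1 ∧ a = 1)) := by
  subst hlam hmu
  have hden1 : 0 < a + d - c := by linarith
  have hden2 : 0 < 1 + (a - c) - (g - d) := by linarith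
  have ht1 : 0 ≤ (1 - g) * (a * (1 - d)) := by
    apply mul_nonneg (by linarith) (mul_nonneg ha (by linarith))
  have ht2 : 0 ≤ (1 - g) * (d - c) := mul_nonneg (by linarith) (by linarith)
  have ht3 : 0 ≤ d * ((1 - a) * (a + (d - c))) := by
    apply mul_nonneg (by linarith) (mul_nonneg (by linarith) (by linarith))
  have key : (1 - (g - d)) * (a + d - c) - a * d * (1 + (a - c) - (g - d))
      = (1 - g) * (a * (1 - d)) + (1 - g) * (d - c) + d * ((1 - a) * (a + (d - c))) := by
    ring
  constructor
  · rw [div_le_div_iff₀ hden1 hden2]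
    linarith
  · rw [div_eq_div_iff hden1.ne' hden2.ne']
    constructor
    · intro heq
      have hsum : (1 - g) * (a * (1 - d)) + (1 - g) * (d - c)
          + d * ((1 - a) * (a + (d - c))) = 0 := by linarith
      have h2 : (1 - g) * (d - c) = 0 := by linarith
      have h3 : d * ((1 - a) * (a + (d - c))) = 0 := by linarith
      have hg : g = 1 := by
        rcases mul_eq_zero.mp h2 with h | h
        · linarith
        · linarith
      refine ⟨hg, ?_⟩
      have hd0 : 0 < d := lt_of_le_of_lt hc hcd
      rcases mul_eq_zero.mp h3 with h | h
      · linarith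
      · rcases mul_eq_zero.mp h with h' | h'
        · linarith
        · linarith
    · rintro ⟨hg, ha'⟩
      subst hg ha'
      ring

/-- exact value and upper bound for `f(ũ,ṽ)`, with the equality condition. -/
theorem stmt8 {m n : ℕ} (R C : Matrix (Fin (m+1)) (Fin (n+1)) ℝ)
    (hR : ∀ i j, R i j ∈ Set.Icc (0:ℝ) 1) (hC : ∀ i j, C i j ∈ Set.Icc (0:ℝ) 1)
    (xs : Fin (m+1) → ℝ) (ys : Fin (n+1) → ℝ) (ρs : ℝ) (ws : Fin (m+1) → ℝ) (zs : Fin (n+1) → ℝ)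
    (hxs : xs ∈ Δ (m+1)) (hys : ys ∈ Δ (n+1))
    (hstat : IsStationary R C xs ys)
    (hdual : IsDualSolution R C xs ys ρs ws zs)
    (hρ : ρs ∈ Set.Ioo (0:ℝ) 1) :
    (fR R ws zs < fC C ws zs →
      fNE R C (tildeUV R C xs ys ws zs).1 (tildeUV R C xs ys ws zs).2
        = fR R xs zs * (fC C ws ys - muStar C ws ys zs)
            / (fC C ws ys + lamStar R xs ws zs - muStar C ws ys zs) ∧
      fNE R C (tildeUV R C xs ys ws zs).1 (tildeUV R C xs ys ws zs).2
        ≤ (1 - muStar C ws ys zs) / (1 + lamStar R xs ws zs - muStar C ws ys zs) ∧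
      (¬ IsNash R C xs ys →
        (fNE R C (tildeUV R C xs ys ws zs).1 (tildeUV R C xs ys ws zs).2
            = (1 - muStar C ws ys zs) / (1 + lamStar R xs ws zs - muStar C ws ys zs) ↔
          (fC C ws ys = 1 ∧ fR R xs zs = 1)))) ∧
    (fC C ws zs < fR R ws zs →
      fNE R C (tildeUV R C xs ys ws zs).1 (tildeUV R C xs ys ws zs).2
        = fC C ws ys * (fR R xs zs - lamStar R xs ws zs)
            / (fR R xs zs + muStar C ws ys zs - lamStar R xs ws zs) ∧
      fNE R C (tildeUV R C xs ys ws zs).1 (tildeUV R C xs ys ws zs).2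
        ≤ (1 - lamStar R xs ws zs) / (1 + muStar C ws ys zs - lamStar R xs ws zs) ∧
      (¬ IsNash R C xs ys →
        (fNE R C (tildeUV R C xs ys ws zs).1 (tildeUV R C xs ys ws zs).2
            = (1 - lamStar R xs ws zs) / (1 + muStar C ws ys zs - lamStar R xs ws zs) ↔
          (fC C ws ys = 1 ∧ fR R xs zs = 1)))) := by
  obtain ⟨⟨hρ01, hws, hsuppw, hzs, hsuppz⟩, -⟩ := hdual
  -- abbreviations
  set a := fR R xs zs with ha_def
  set c := fR R ws zs with hc_def
  set d := fC C ws zs with hd_def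
  set g := fC C ws ys with hg_def
  have hamem : a ∈ Set.Icc (0:ℝ) 1 := fR_mem hR hxs hzs
  have hcmem : c ∈ Set.Icc (0:ℝ) 1 := fR_mem hR hws hzs
  have hdmem : d ∈ Set.Icc (0:ℝ) 1 := fC_mem hC hws hzs
  have hgmem : g ∈ Set.Icc (0:ℝ) 1 := fC_mem hC hws hys
  have hlam : lamStar R xs ws zs = a - c := by
    simp only [lamStar, ha_def, hc_def, fR, sub_dotProduct]; ring
  have hmu : muStar C ws ys zs = g - d := by
    simp only [muStar, hd_def, hg_def, fC, Matrix.mulVec_sub, dotProduct_sub]; ring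
  -- special dot product values
  have hxCz : xs ⬝ᵥ C.mulVec zs = vmax (Matrix.vecMul xs C) := by
    rw [Matrix.dotProduct_mulVec]
    exact dot_eq_vmax hzs hsuppz
  have hwRy : ws ⬝ᵥ R.mulVec ys = vmax (R.mulVec ys) := by
    rw [dotProduct_comm]
    exact dot_eq_vmax hws hsuppw
  constructor
  · -- Case 1 : fR ws zs < fC ws zs
    intro hlt
    have hden : 0 < a + d - c := by
      rcases hamem with ⟨ha0, _⟩; linarith
    have hp : pstar R C xs ws zs = a / (a + d - c) := rfl
    have hp0 : 0 ≤ pstar R C xs ws zs := by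
      rw [hp]; exact div_nonneg hamem.1 hden.le
    have hp1 : pstar R C xs ws zs ≤ 1 := by
      rw [hp, div_le_one hden]; linarith
    set p := pstar R C xs ws zs with hp_def
    have htil : tildeUV R C xs ys ws zs = (p • ws + (1 - p) • xs, zs) := by
      simp only [tildeUV, if_pos hlt.le, hp_def]; exact if_pos hlt.le
    set u := p • ws + (1 - p) • xs with hu_def
    -- value of fR at (u, zs)
    have hdotR : u ⬝ᵥ R.mulVec zs
        = p * (ws ⬝ᵥ R.mulVec zs) + (1 - p) * (xs ⬝ᵥ R.mulVec zs) := by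
      rw [hu_def, add_dotProduct, smul_dotProduct, smul_dotProduct]; rfl
    have hfRu : fR R u zs = a * d / (a + d - c) := by
      have h1 : fR R u zs = p * c + (1 - p) * a := by
        simp only [fR, hdotR, hc_def, ha_def]; ring
      rw [h1, hp]
      field_simp
      ring
    -- bound on fC at (u, zs)
    have hfCu : fC C u zs ≤ p * d := by
      have hvm : Matrix.vecMul u C
          = p • Matrix.vecMul ws C + (1 - p) • Matrix.vecMul xs C := by
        rw [hu_def, Matrix.add_vecMul, Matrix.smul_vecMul, Matrix.smul_vecMul]
      have h1 : vmax (Matrix.vecMul u C)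
          ≤ p * vmax (Matrix.vecMul ws C) + (1 - p) * vmax (Matrix.vecMul xs C) := by
        rw [hvm]; exact vmax_combo hp0 (by linarith)
      have h2 : u ⬝ᵥ C.mulVec zs
          = p * (ws ⬝ᵥ C.mulVec zs) + (1 - p) * (xs ⬝ᵥ C.mulVec zs) := by
        rw [hu_def, add_dotProduct, smul_dotProduct, smul_dotProduct]; rfl
      have : fC C u zs ≤ p * (vmax (Matrix.vecMul ws C) - ws ⬝ᵥ C.mulVec zs)
          + (1 - p) * (vmax (Matrix.vecMul xs C) - xs ⬝ᵥ C.mulVec zs) := by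
        simp only [fC, h2]; linarith
      rw [hxCz] at this
      simp only [fC] at this ⊢
      simp only [hd_def, fC]
      linarith
    have hpd : p * d = a * d / (a + d - c) := by
      rw [hp, div_mul_eq_mul_div]
    have hfNE : fNE R C u zs = a * d / (a + d - c) := by
      have hle : fC C u zs ≤ fR R u zs := by rw [hfRu, ← hpd]; exact hfCu
      unfold fNE
      rw [max_eq_left hle, hfRu]
    have hgoal : fNE R C (tildeUV R C xs ys ws zs).1 (tildeUV R C xs ys ws zs).2
        = a * d / (a + d - c) := by
      rw [htil]; exact hfNE
    have hval : a * (g - muStar C ws ys zs)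
        / (g + lamStar R xs ws zs - muStar C ws ys zs) = a * d / (a + d - c) := by
      rw [hlam, hmu]
      congr 1 <;> ring
    obtain ⟨hineq, hiff⟩ := core_ineq hamem.1 hamem.2 hcmem.1 hdmem.2 hgmem.2 hlt hlam hmu
    refine ⟨by rw [hgoal]; exact hval.symm, by rw [hgoal]; exact hineq, ?_⟩
    intro _
    rw [hgoal]
    exact hiff
  · -- Case 2 : fC ws zs < fR ws zs
    intro hlt
    have hden : 0 < g + c - d := by
      rcases hgmem with ⟨hg0, _⟩; linarith
    have hq : qstar R C ws ys zs = g / (g + c - d) := rfl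
    have hq0 : 0 ≤ qstar R C ws ys zs := by
      rw [hq]; exact div_nonneg hgmem.1 hden.le
    have hq1 : qstar R C ws ys zs ≤ 1 := by
      rw [hq, div_le_one hden]; linarith
    set q := qstar R C ws ys zs with hq_def
    have htil : tildeUV R C xs ys ws zs = (ws, q • zs + (1 - q) • ys) := by
      simp only [tildeUV, if_neg (not_le.mpr hlt), hq_def]; exact if_neg (not_le.mpr hlt)
    set v := q • zs + (1 - q) • ys with hv_def
    have hCv : C.mulVec v = q • C.mulVec zs + (1 - q) • C.mulVec ys := by
      rw [hv_def, Matrix.mulVec_add, Matrix.mulVec_smul, Matrix.mulVec_smul]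
    have hRv : R.mulVec v = q • R.mulVec zs + (1 - q) • R.mulVec ys := by
      rw [hv_def, Matrix.mulVec_add, Matrix.mulVec_smul, Matrix.mulVec_smul]
    have hdotC : ws ⬝ᵥ C.mulVec v
        = q * (ws ⬝ᵥ C.mulVec zs) + (1 - q) * (ws ⬝ᵥ C.mulVec ys) := by
      rw [hCv, dotProduct_add, dotProduct_smul, dotProduct_smul]; rfl
    have hfCv : fC C ws v = g * c / (g + c - d) := by
      have h1 : fC C ws v = q * d + (1 - q) * g := by
        simp only [fC, hdotC, hd_def, hg_def]; ring
      rw [h1, hq]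
      field_simp
      ring
    have hfRv : fR R ws v ≤ q * c := by
      have h1 : vmax (R.mulVec v)
          ≤ q * vmax (R.mulVec zs) + (1 - q) * vmax (R.mulVec ys) := by
        rw [hRv]; exact vmax_combo hq0 (by linarith)
      have h2 : ws ⬝ᵥ R.mulVec v
          = q * (ws ⬝ᵥ R.mulVec zs) + (1 - q) * (ws ⬝ᵥ R.mulVec ys) := by
        rw [hRv, dotProduct_add, dotProduct_smul, dotProduct_smul]; rfl
      have : fR R ws v ≤ q * (vmax (R.mulVec zs) - ws ⬝ᵥ R.mulVec zs)
          + (1 - q) * (vmax (R.mulVec ys) - ws ⬝ᵥ R.mulVec ys) := by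
        simp only [fR, h2]; linarith
      rw [hwRy] at this
      simp only [hc_def, fR] at this ⊢
      linarith
    have hqc : q * c = g * c / (g + c - d) := by
      rw [hq, div_mul_eq_mul_div]
    have hfNE : fNE R C ws v = g * c / (g + c - d) := by
      have hle : fR R ws v ≤ fC C ws v := by rw [hfCv, ← hqc]; exact hfRv
      unfold fNE
      rw [max_eq_right hle, hfCv]
    have hgoal : fNE R C (tildeUV R C xs ys ws zs).1 (tildeUV R C xs ys ws zs).2
        = g * c / (g + c - d) := by
      rw [htil]; exact hfNE
    have hval : g * (a - lamStar R xs ws zs)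
        / (a + muStar C ws ys zs - lamStar R xs ws zs) = g * c / (g + c - d) := by
      rw [hlam, hmu]
      congr 1 <;> ring
    obtain ⟨hineq, hiff⟩ := core_ineq (lam := muStar C ws ys zs) (mu := lamStar R xs ws zs)
      hgmem.1 hgmem.2 hdmem.1 hcmem.2 hamem.2 hlt hmu hlam
    refine ⟨by rw [hgoal]; exact hval.symm, by rw [hgoal]; exact hineq, ?_⟩
    intro _
    rw [hgoal, hiff]
    exact and_comm

end TS
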